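/- arXiv:0908.4479 — 4 statements merged into one kernel-verified Lean document; each statement's English description precedes it below -/
import Mathlib

section
/- Let X and A be independent nonnegative random variables with lim_{u→∞} u^r P(X > u) = D for some r > 0, D ≥ 0, and E[A^α] < ∞ for some α > r. Then lim_{u→∞} u^r P(A X > u) = D · E[A^r]. -/
open MeasureTheory ProbabilityTheory Filter

theorem breiman_lemma {Ω : Type*} [MeasurableSpace Ω] (μ : Measure Ω)
    [IsProbabilityMeasure μ] (X A : Ω → ℝ)
    (hXmeas : Measurable X) (hAmeas : Measurable A)
    (hXnn : ∀ ω, 0 ≤ X ω) (hAnn : ∀ ω, 0 ≤ A ω)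
    (hindep : IndepFun X A μ)
    (r D α : ℝ) (hr : 0 < r) (hD : 0 ≤ D) (hα : r < α)
    (htail : Tendsto (fun u : ℝ => u ^ r * (μ {ω | u < X ω}).toReal)
      atTop (nhds D))
    (hmom : Integrable (fun ω => A ω ^ α) μ) :
    Tendsto (fun u : ℝ => u ^ r * (μ {ω | u < A ω * X ω}).toReal)
      atTop (nhds (D * ∫ ω, A ω ^ r ∂μ)) := by
  set π : Measure ℝ := μ.map A with hπdef
  set ν : Measure ℝ := μ.map X with hνdef
  have hπprob : IsProbabilityMeasure π := Measure.isProbabilityMeasure_map hAmeas.aemeasurable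
  have hνprob : IsProbabilityMeasure ν := Measure.isProbabilityMeasure_map hXmeas.aemeasurable
  have hmap : μ.map (fun ω => (A ω, X ω)) = π.prod ν :=
    (indepFun_iff_map_prod_eq_prod_map_map hAmeas.aemeasurable hXmeas.aemeasurable).mp
      hindep.symm
  have hs : ∀ u : ℝ, MeasurableSet {p : ℝ × ℝ | u < p.1 * p.2} := fun u =>
    measurableSet_lt measurable_const (measurable_fst.mul measurable_snd)
  -- key slicing identity
  have hkey : ∀ u : ℝ, μ {ω | u < A ω * X ω} = ∫⁻ a, ν {x | u < a * x} ∂π := by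
    intro u
    have h1 : μ {ω | u < A ω * X ω}
        = μ.map (fun ω => (A ω, X ω)) {p : ℝ × ℝ | u < p.1 * p.2} := by
      rw [Measure.map_apply (hAmeas.prodMk hXmeas) (hs u)]
      rfl
    rw [h1, hmap, Measure.prod_apply (hs u)]
    rfl
  -- the integrand
  set G : ℝ → ℝ → ℝ := fun u a => u ^ r * (ν {x | u < a * x}).toReal with hGdef
  have hGmeas : ∀ u, Measurable (G u) := by
    intro u
    exact ((measurable_measure_prodMk_left (hs u)).ennreal_toReal).const_mul _
  have hrepr : ∀ u : ℝ, u ^ r * (μ {ω | u < A ω * X ω}).toReal = ∫ a, G u a ∂π := by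
    intro u
    rw [hkey u, hGdef]
    rw [integral_const_mul]
    congr 1
    exact (integral_toReal ((measurable_measure_prodMk_left (hs u)).aemeasurable)
      (Filter.Eventually.of_forall fun a => measure_lt_top ν _)).symm
  -- tail function of X in terms of ν
  have hg : ∀ v : ℝ, ν {x | v < x} = μ {ω | v < X ω} := fun v =>
    Measure.map_apply hXmeas measurableSet_Ioi
  -- a.e. nonnegativity under π
  have hπnn : ∀ᵐ a ∂π, 0 ≤ a := by
    rw [hπdef, ae_map_iff hAmeas.aemeasurable measurableSet_Ici]
    exact Filter.Eventually.of_forall hAnn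
  -- pointwise limit
  have hlim : ∀ᵐ a ∂π, Tendsto (fun u => G u a) atTop (nhds (D * a ^ r)) := by
    filter_upwards [hπnn] with a ha
    rcases eq_or_lt_of_le ha with h0 | h0
    · -- a = 0
      subst h0
      have : ∀ᶠ u in atTop, G u 0 = 0 := by
        filter_upwards [eventually_gt_atTop (0:ℝ)] with u hu
        have h2 : {x : ℝ | u < (0:ℝ) * x} = ∅ := by
          ext x; simp [not_lt.mpr hu.le]
        have h3 : ν {x : ℝ | u < (0:ℝ) * x} = 0 := by
          rw [h2]; exact measure_empty
        simp only [hGdef, h3, ENNReal.toReal_zero, mul_zero]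
      rw [Real.zero_rpow hr.ne', mul_zero]
      refine Tendsto.congr' ?_ tendsto_const_nhds
      filter_upwards [this] with u h
      exact h.symm
    · -- a > 0
      have heq : ∀ᶠ u in atTop, G u a
          = a ^ r * ((u / a) ^ r * (μ {ω | u / a < X ω}).toReal) := by
        filter_upwards [eventually_gt_atTop (0:ℝ)] with u hu
        have hset : {x : ℝ | u < a * x} = {x : ℝ | u / a < x} := by
          ext x; simp [div_lt_iff₀ h0, mul_comm]
        have hpow : u ^ r = a ^ r * (u / a) ^ r := by
          rw [← Real.mul_rpow h0.le (div_nonneg hu.le h0.le), mul_div_cancel₀ _ h0.ne']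
        simp only [hGdef, hset, hg]
        rw [hpow, mul_assoc]
      have hT := (htail.comp (tendsto_id.atTop_div_const h0)).const_mul (a ^ r)
      rw [mul_comm (a ^ r) D] at hT
      have heq' : (fun u => G u a) =ᶠ[atTop]
          (fun u => a ^ r * ((u / a) ^ r * (μ {ω | u / a < X ω}).toReal)) := heq
      exact Tendsto.congr' heq'.symm hT
  -- domination
  obtain ⟨u0, hu0⟩ : ∃ u0 : ℝ, ∀ v ≥ u0,
      v ^ r * (μ {ω | v < X ω}).toReal ≤ D + 1 := by
    have := htail.eventually (eventually_le_nhds (lt_add_one D))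
    exact eventually_atTop.mp this
  set u1 : ℝ := max u0 1 with hu1def
  have hu1one : (1:ℝ) ≤ u1 := le_max_right _ _
  set C : ℝ := D + 1 + u1 ^ r with hCdef
  have hCnn : 0 ≤ C := by positivity
  set bound : ℝ → ℝ := fun a => C * (1 + a ^ α) with hbdef
  have hbound : ∀ᶠ u in atTop, ∀ᵐ a ∂π, ‖G u a‖ ≤ bound a := by
    filter_upwards [eventually_ge_atTop u1] with u hu
    filter_upwards [hπnn] with a ha
    have hupos : (0:ℝ) < u := lt_of_lt_of_le (by linarith) hu
    have hGnn : 0 ≤ G u a := by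
      exact mul_nonneg (Real.rpow_nonneg hupos.le r) ENNReal.toReal_nonneg
    rw [Real.norm_of_nonneg hGnn]
    have haα : (0:ℝ) ≤ a ^ α := Real.rpow_nonneg ha α
    rcases eq_or_lt_of_le ha with h0 | h0
    · have : {x : ℝ | u < a * x} = ∅ := by
        ext x; simp [← h0, not_lt.mpr hupos.le]
      rw [hGdef]; simp only [this]
      simp only [measure_empty, ENNReal.toReal_zero, mul_zero]
      positivity
    · -- a > 0
      have hset : {x : ℝ | u < a * x} = {x : ℝ | u / a < x} := by
        ext x; simp [div_lt_iff₀ h0, mul_comm]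
      have harα : a ^ r ≤ 1 + a ^ α := by
        rcases le_total a 1 with h1 | h1
        · have := Real.rpow_le_one ha h1 hr.le
          linarith
        · have := Real.rpow_le_rpow_of_exponent_le h1 hα.le
          linarith
      rcases le_total u0 (u / a) with hcase | hcase
      · -- use the tail bound
        have hpow : u ^ r = a ^ r * (u / a) ^ r := by
          rw [← Real.mul_rpow h0.le (div_nonneg hupos.le h0.le),
            mul_div_cancel₀ _ h0.ne']
        have hGval : G u a = a ^ r * ((u/a) ^ r * (μ {ω | u/a < X ω}).toReal) := by
          rw [hGdef]; simp only [hset, hg]; rw [hpow, mul_assoc]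
        have h2 := hu0 (u/a) hcase
        have harnn : (0:ℝ) ≤ a ^ r := Real.rpow_nonneg h0.le r
        calc G u a ≤ a ^ r * (D + 1) := by
              rw [hGval]; exact mul_le_mul_of_nonneg_left h2 harnn
          _ ≤ (1 + a ^ α) * (D + 1) := by
              exact mul_le_mul_of_nonneg_right harα (by linarith)
          _ ≤ bound a := by
              simp only [hbdef, hCdef]
              have h3 : (0:ℝ) ≤ u1 ^ r := Real.rpow_nonneg (by linarith) r
              nlinarith [mul_nonneg h3 (by linarith : (0:ℝ) ≤ 1 + a ^ α)]
      · -- a is large : u < u1 * a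
        have hu0a : u ≤ u0 * a := (div_le_iff₀ h0).mp hcase
        have halarge : 1 ≤ a := by
          by_contra h
          push_neg at h
          have hu0pos : 0 < u0 := by nlinarith
          have := mul_lt_mul_of_pos_left h hu0pos
          have hu0u : u0 ≤ u := le_trans (le_max_left _ _) hu
          nlinarith
        have hua : u ≤ u1 * a := by
          have h4 : u0 * a ≤ u1 * a :=
            mul_le_mul_of_nonneg_right (le_max_left _ _) h0.le
          linarith
        have hprob : (ν {x | u < a * x}).toReal ≤ 1 := by
          have := prob_le_one (μ := ν) (s := {x | u < a * x})
          exact ENNReal.toReal_le_of_le_ofReal zero_le_one (by simpa using this)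
        calc G u a ≤ u ^ r * 1 := by
              exact mul_le_mul_of_nonneg_left hprob (Real.rpow_nonneg hupos.le r)
          _ = u ^ r := mul_one _
          _ ≤ (u1 * a) ^ r := Real.rpow_le_rpow hupos.le hua hr.le
          _ = u1 ^ r * a ^ r := Real.mul_rpow (by linarith) h0.le
          _ ≤ u1 ^ r * a ^ α := by
              exact mul_le_mul_of_nonneg_left
                (Real.rpow_le_rpow_of_exponent_le halarge hα.le)
                (Real.rpow_nonneg (by linarith) r)
          _ ≤ bound a := by
              simp only [hbdef, hCdef]
              have h3 : (0:ℝ) ≤ u1 ^ r := Real.rpow_nonneg (by linarith) r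
              nlinarith [mul_nonneg (by linarith : (0:ℝ) ≤ D + 1)
                (by linarith : (0:ℝ) ≤ 1 + a ^ α)]
  -- integrability of the bound
  have hαmeas : Measurable fun a : ℝ => a ^ α := by fun_prop
  have hαint : Integrable (fun a : ℝ => a ^ α) π := by
    rw [hπdef, integrable_map_measure hαmeas.aestronglyMeasurable hAmeas.aemeasurable]
    exact hmom
  have hboundint : Integrable bound π := by
    rw [hbdef]
    exact ((integrable_const (1:ℝ)).add hαint).const_mul C
  -- dominated convergence
  have hDCT := tendsto_integral_filter_of_dominated_convergence (μ := π)
    (F := fun u a => G u a) (f := fun a => D * a ^ r) bound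
    (Filter.Eventually.of_forall fun u => (hGmeas u).aestronglyMeasurable)
    hbound hboundint hlim
  have hfinal : ∫ a, D * a ^ r ∂π = D * ∫ ω, A ω ^ r ∂μ := by
    rw [integral_const_mul]
    congr 1
    rw [hπdef, integral_map hAmeas.aemeasurable]
    exact (Measurable.aestronglyMeasurable (by fun_prop))
  rw [← hfinal]
  exact Tendsto.congr (fun u => (hrepr u).symm) hDCT
end

section
/- Let (A_n)_{n≥0} be positive random variables and (B_n)_{n≥0} real random variables with (B_n) i.i.d. and independent of (A_n, τ), where τ ≥ 1 is a positive-integer-valued random variable. Suppose α ≥ 1, E[|B_0|^α] < ∞, and Σ_{n=0}^∞ (E[(A_0 ⋯ A_{n-1})^α 1_{τ > n}])^{1/α} < ∞. Then E[(Σ_{n=0}^{τ-1} (A_0 ⋯ A_{n-1}) |B_n|)^α] < ∞. -/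
/-!
The `n`-th term of the cycle sum is `W n * |B n|`, where `W n = A₀ ⋯ A_{n-1} 1_{n < τ}` is a
function of `(A, τ)` and hence independent of `B n`. So the `L^α` norm of each term factors as
`‖W n‖_α ‖B₀‖_α`, and Minkowski's inequality for the series `∑ W n |B n|` bounds the `L^α` norm
of the cycle sum by `‖B₀‖_α ∑ ‖W n‖_α < ∞`.
-/

open MeasureTheory ProbabilityTheory Finset
open scoped ENNReal

section Minkowski

variable {Ω : Type*} [MeasurableSpace Ω] {μ : Measure Ω} {p : ℝ}

theorem lintegral_Lp_finset_sum_le {ι : Type*} (hp : 1 ≤ p) {F : ι → Ω → ℝ≥0∞}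
    (s : Finset ι) (hF : ∀ i ∈ s, AEMeasurable (F i) μ) :
    (∫⁻ ω, (∑ i ∈ s, F i ω) ^ p ∂μ) ^ (1 / p) ≤ ∑ i ∈ s, (∫⁻ ω, F i ω ^ p ∂μ) ^ (1 / p) := by
  simpa [eLpNorm'_eq_lintegral_enorm] using
    eLpNorm'_sum_le (μ := μ) (fun i hi => (hF i hi).aestronglyMeasurable) hp

theorem lintegral_Lp_tsum_le {ι : Type*} [Countable ι] (hp : 1 ≤ p) {F : ι → Ω → ℝ≥0∞}
    (hF : ∀ i, AEMeasurable (F i) μ) :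
    (∫⁻ ω, (∑' i, F i ω) ^ p ∂μ) ^ (1 / p) ≤ ∑' i, (∫⁻ ω, F i ω ^ p ∂μ) ^ (1 / p) := by
  have hp0 : 0 < p := zero_lt_one.trans_le hp
  have hpow (ω : Ω) : (∑' i, F i ω) ^ p = ⨆ s : Finset ι, (∑ i ∈ s, F i ω) ^ p := by
    rw [ENNReal.tsum_eq_iSup_sum]
    exact (ENNReal.orderIsoRpow p hp0).map_iSup _
  have hdir : Directed (· ≤ ·) fun s : Finset ι => fun ω => (∑ i ∈ s, F i ω) ^ p :=
    Monotone.directed_le fun s t hst ω => by gcongr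
  calc (∫⁻ ω, (∑' i, F i ω) ^ p ∂μ) ^ (1 / p)
      = (⨆ s : Finset ι, ∫⁻ ω, (∑ i ∈ s, F i ω) ^ p ∂μ) ^ (1 / p) := by
        simp_rw [hpow]
        rw [lintegral_iSup_directed (fun s => ?_) hdir]
        exact (Finset.aemeasurable_fun_sum _ fun i _ => hF i).pow_const p
    _ = ⨆ s : Finset ι, (∫⁻ ω, (∑ i ∈ s, F i ω) ^ p ∂μ) ^ (1 / p) :=
        (ENNReal.orderIsoRpow (1 / p) (one_div_pos.2 hp0)).map_iSup _
    _ ≤ ∑' i, (∫⁻ ω, F i ω ^ p ∂μ) ^ (1 / p) :=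
        iSup_le fun s => (lintegral_Lp_finset_sum_le hp s fun i _ => hF i).trans
          (ENNReal.sum_le_tsum s)

theorem lintegral_mul_rpow_eq_of_indepFun (hp : 0 ≤ p) {f g : Ω → ℝ≥0∞} (hf : AEMeasurable f μ)
    (hg : AEMeasurable g μ) (hfg : IndepFun f g μ) :
    ∫⁻ ω, (f ω * g ω) ^ p ∂μ = (∫⁻ ω, f ω ^ p ∂μ) * ∫⁻ ω, g ω ^ p ∂μ := by
  simp_rw [ENNReal.mul_rpow_of_nonneg _ _ hp]
  exact lintegral_mul_eq_lintegral_mul_lintegral_of_indepFun'' (hf.pow_const p) (hg.pow_const p)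
    (hfg.comp (measurable_id.pow_const p) (measurable_id.pow_const p))

theorem lintegral_Lp_tsum_mul_le_of_indepFun {ι : Type*} [Countable ι] (hp : 1 ≤ p)
    {G H : ι → Ω → ℝ≥0∞} {Z : Ω → ℝ≥0∞} (hG : ∀ i, AEMeasurable (G i) μ)
    (hH : ∀ i, AEMeasurable (H i) μ) (hGH : ∀ i, IndepFun (G i) (H i) μ)
    (hHZ : ∀ i, IdentDistrib (H i) Z μ μ) :
    (∫⁻ ω, (∑' i, G i ω * H i ω) ^ p ∂μ) ^ (1 / p) ≤
      (∫⁻ ω, Z ω ^ p ∂μ) ^ (1 / p) * ∑' i, (∫⁻ ω, G i ω ^ p ∂μ) ^ (1 / p) := by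
  have hp0 : 0 < p := zero_lt_one.trans_le hp
  refine (lintegral_Lp_tsum_le (F := fun i ω => G i ω * H i ω) hp
    fun i => (hG i).mul (hH i)).trans_eq ?_
  rw [← ENNReal.tsum_mul_left]
  refine tsum_congr fun i => ?_
  have hHZ_mom : ∫⁻ ω, H i ω ^ p ∂μ = ∫⁻ ω, Z ω ^ p ∂μ :=
    ((hHZ i).comp (measurable_id.pow_const p)).lintegral_eq
  rw [lintegral_mul_rpow_eq_of_indepFun hp0.le (hG i) (hH i) (hGH i), hHZ_mom,
    ENNReal.mul_rpow_of_nonneg _ _ (one_div_pos.2 hp0).le, mul_comm]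

end Minkowski

noncomputable def truncatedDiscount (n : ℕ) (q : (ℕ → ℝ) × ℕ) : ℝ≥0∞ :=
  if n < q.2 then ENNReal.ofReal (∏ i ∈ range n, q.1 i) else 0

theorem measurable_truncatedDiscount (n : ℕ) : Measurable (truncatedDiscount n) :=
  Measurable.ite (measurableSet_lt measurable_const measurable_snd)
    (ENNReal.measurable_ofReal.comp
      (Finset.measurable_prod _ fun i _ => (measurable_pi_apply i).comp measurable_fst))
    measurable_const

theorem ofReal_discounted_sum_rpow_eq_tsum {a b : ℕ → ℝ} (ha : ∀ n, 0 ≤ a n) {p : ℝ}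
    (hp : 0 ≤ p) (N : ℕ) :
    ENNReal.ofReal ((∑ n ∈ range N, (∏ i ∈ range n, a i) * |b n|) ^ p) =
      (∑' n, truncatedDiscount n (a, N) * ENNReal.ofReal |b n|) ^ p := by
  have hterm_nonneg n : 0 ≤ (∏ i ∈ range n, a i) * |b n| :=
    mul_nonneg (prod_nonneg fun i _ => ha i) (abs_nonneg _)
  have hterm n : truncatedDiscount n (a, N) * ENNReal.ofReal |b n| =
      if n ∈ range N then ENNReal.ofReal ((∏ i ∈ range n, a i) * |b n|) else 0 := by
    simp only [truncatedDiscount, mem_range]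
    split_ifs <;> simp [ENNReal.ofReal_mul (prod_nonneg fun i _ => ha i)]
  rw [tsum_congr hterm, tsum_eq_sum (s := range N) fun n hn => if_neg hn,
    sum_congr rfl fun n hn => if_pos hn, ← ENNReal.ofReal_sum_of_nonneg fun n _ => hterm_nonneg n,
    ENNReal.ofReal_rpow_of_nonneg (sum_nonneg fun n _ => hterm_nonneg n) hp]

theorem lintegral_truncatedDiscount_rpow {Ω : Type*} [MeasurableSpace Ω] (μ : Measure Ω)
    {A : ℕ → Ω → ℝ} {τ : Ω → ℕ} (hA : ∀ n ω, 0 ≤ A n ω) (hτ : Measurable τ) {p : ℝ}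
    (hp : 0 < p) (n : ℕ) :
    ∫⁻ ω, truncatedDiscount n ((fun i => A i ω), τ ω) ^ p ∂μ =
      ∫⁻ ω in {ω | n < τ ω}, ENNReal.ofReal ((∏ i ∈ range n, A i ω) ^ p) ∂μ := by
  rw [← lintegral_indicator (measurableSet_lt measurable_const hτ)]
  refine lintegral_congr fun ω => ?_
  simp only [truncatedDiscount, Set.indicator_apply, Set.mem_ofPred_eq]
  split_ifs <;>
    simp [ENNReal.ofReal_rpow_of_nonneg (prod_nonneg fun i _ => hA i ω) hp.le, hp]

theorem minkowski_discounted_moment_bound_general {Ω : Type*} [MeasurableSpace Ω]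
    (μ : Measure Ω)
    (A : ℕ → Ω → ℝ) (B : ℕ → Ω → ℝ) (τ : Ω → ℕ)
    (hAmeas : ∀ n, Measurable (A n)) (hBmeas : ∀ n, Measurable (B n))
    (hτmeas : Measurable τ)
    (hApos : ∀ n ω, 0 < A n ω)
    (hBident : ∀ n, IdentDistrib (B n) (B 0) μ μ)
    (hBindep : IndepFun (fun ω => fun n => B n ω)
      (fun ω => ((fun n => A n ω), τ ω)) μ)
    (α : ℝ) (hα : 1 ≤ α)
    (hBmom : ∫⁻ ω, ENNReal.ofReal (|B 0 ω| ^ α) ∂μ < ⊤)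
    (hAsum : ∑' n : ℕ,
      (∫⁻ ω in {ω | n < τ ω},
        ENNReal.ofReal ((∏ i ∈ Finset.range n, A i ω) ^ α) ∂μ) ^ (α⁻¹) < ⊤) :
    ∫⁻ ω, ENNReal.ofReal
      ((∑ n ∈ Finset.range (τ ω),
        (∏ i ∈ Finset.range n, A i ω) * |B n ω|) ^ α) ∂μ < ⊤ := by
  have hα0 : 0 < α := zero_lt_one.trans_le hα
  have hA : ∀ n ω, 0 ≤ A n ω := fun n ω => (hApos n ω).le
  have hAτ : Measurable fun ω => ((fun n => A n ω), τ ω) :=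
    (measurable_pi_lambda _ hAmeas).prodMk hτmeas
  have habs_coord n : Measurable fun b : ℕ → ℝ => ENNReal.ofReal |b n| :=
    ENNReal.measurable_ofReal.comp (measurable_pi_apply n).abs
  have hbound := lintegral_Lp_tsum_mul_le_of_indepFun (μ := μ) hα
    (G := fun n ω => truncatedDiscount n ((fun i => A i ω), τ ω))
    (H := fun n ω => ENNReal.ofReal |B n ω|) (Z := fun ω => ENNReal.ofReal |B 0 ω|)
    (fun n => ((measurable_truncatedDiscount n).comp hAτ).aemeasurable)
    (fun n => (ENNReal.measurable_ofReal.comp (hBmeas n).abs).aemeasurable)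
    (fun n => (hBindep.comp (habs_coord n) (measurable_truncatedDiscount n)).symm)
    (fun n => (hBident n).comp (ENNReal.measurable_ofReal.comp measurable_abs))
  simp_rw [lintegral_truncatedDiscount_rpow μ hA hτmeas hα0,
    ENNReal.ofReal_rpow_of_nonneg (abs_nonneg _) hα0.le] at hbound
  rw [lintegral_congr fun ω => ofReal_discounted_sum_rpow_eq_tsum (hA · ω) hα0.le (τ ω),
    ← ENNReal.rpow_lt_top_iff_of_pos (one_div_pos.2 hα0)]
  refine hbound.trans_lt (ENNReal.mul_lt_top ?_ (by simpa only [one_div] using hAsum))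
  exact ENNReal.rpow_lt_top_of_nonneg (one_div_pos.2 hα0).le hBmom.ne

theorem minkowski_discounted_moment_bound {Ω : Type*} [MeasurableSpace Ω]
    (μ : Measure Ω) [IsProbabilityMeasure μ]
    (A : ℕ → Ω → ℝ) (B : ℕ → Ω → ℝ) (τ : Ω → ℕ)
    (hAmeas : ∀ n, Measurable (A n)) (hBmeas : ∀ n, Measurable (B n))
    (hτmeas : Measurable τ)
    (hApos : ∀ n ω, 0 < A n ω) (hτ : ∀ ω, 1 ≤ τ ω)
    (hBiid : iIndepFun B μ)
    (hBident : ∀ n, IdentDistrib (B n) (B 0) μ μ)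
    (hBindep : IndepFun (fun ω => fun n => B n ω)
      (fun ω => ((fun n => A n ω), τ ω)) μ)
    (α : ℝ) (hα : 1 ≤ α)
    (hBmom : ∫⁻ ω, ENNReal.ofReal (|B 0 ω| ^ α) ∂μ < ⊤)
    (hAsum : ∑' n : ℕ,
      (∫⁻ ω in {ω | n < τ ω},
        ENNReal.ofReal ((∏ i ∈ Finset.range n, A i ω) ^ α) ∂μ) ^ (α⁻¹) < ⊤) :
    ∫⁻ ω, ENNReal.ofReal
      ((∑ n ∈ Finset.range (τ ω),
        (∏ i ∈ Finset.range n, A i ω) * |B n ω|) ^ α) ∂μ < ⊤ :=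
  minkowski_discounted_moment_bound_general μ A B τ hAmeas hBmeas hτmeas hApos hBident hBindep α hα
    hBmom hAsum
end

section
/- Suppose E[exp(α S'_n) 1_{τ > n}] ≤ K ρ^{-n} for all n ≥ 0, where K < ∞, ρ > 1, and α ≥ 1. If additionally E[|B|^α] < ∞ for an i.i.d. sequence (B_n) independent of (S'_n, τ), then E[(|B_0| + Σ_{n=1}^∞ e^{S'_{n-1}} |B_n| 1_{τ > n})^α] < ∞. -/
/-!
By Minkowski's inequality in `L^α` (countable form, via monotone convergence) the `L^α` norm
of `|B₀| + ∑ₙ e^{S'ₙ} |Bₙ₊₁| 1_{τ > n+1}` is at most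
`‖B₀‖_α + ∑ₙ ‖e^{S'ₙ} Bₙ₊₁ 1_{τ > n+1}‖_α`. Independence of `B` from `(S', τ)` factors the
`α`-th moment of the `n`-th term as `E[e^{α S'ₙ}; τ > n+1] · E|B|^α ≤ K ρ^{-n} E|B|^α`, so the
norms decay like `(ρ^{-1/α})ⁿ` and their sum is finite.
-/

open MeasureTheory ProbabilityTheory Finset
open scoped ENNReal

theorem ENNReal.tsum_rpow_mul_geometric_lt_top {c r : ℝ≥0∞} (hc : c ≠ ∞) (hr : r < 1)
    {s : ℝ} (hs : 0 < s) : ∑' n : ℕ, (c * r ^ n) ^ s < ∞ := by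
  have hterm : ∀ n : ℕ, (c * r ^ n) ^ s = c ^ s * (r ^ s) ^ n := fun n => by
    rw [ENNReal.mul_rpow_of_nonneg _ _ hs.le, ← ENNReal.rpow_natCast_mul, mul_comm (n : ℝ) s,
      ENNReal.rpow_mul_natCast]
  simp_rw [hterm, ENNReal.tsum_mul_left, ENNReal.tsum_geometric]
  exact ENNReal.mul_lt_top (ENNReal.rpow_lt_top_of_nonneg hs.le hc)
    (ENNReal.inv_lt_top.2 (tsub_pos_of_lt (ENNReal.rpow_lt_one hr hs)))

theorem ENNReal.ofReal_tsum_le {ι : Type*} {f : ι → ℝ} (hf : ∀ i, 0 ≤ f i) :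
    ENNReal.ofReal (∑' i, f i) ≤ ∑' i, ENNReal.ofReal (f i) := by
  by_cases hs : Summable f
  · exact (ENNReal.ofReal_tsum_of_nonneg hf hs).le
  · simp [tsum_eq_zero_of_not_summable hs]

theorem ENNReal.ofReal_rpow_add_tsum_le {a p : ℝ} {t : ℕ → ℝ} (ha : 0 ≤ a)
    (ht : ∀ n, 0 ≤ t n) (hp : 0 ≤ p) :
    ENNReal.ofReal ((a + ∑' n, t n) ^ p) ≤
      (ENNReal.ofReal a + ∑' n, ENNReal.ofReal (t n)) ^ p := by
  rw [← ENNReal.ofReal_rpow_of_nonneg (add_nonneg ha (tsum_nonneg ht)) hp]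
  gcongr
  exact ENNReal.ofReal_add_le.trans (add_le_add_right (ENNReal.ofReal_tsum_le ht) _)

namespace MeasureTheory

variable {α : Type*} {m : MeasurableSpace α} {μ : Measure α}

theorem eLpNorm'_tsum_le {f : ℕ → α → ℝ≥0∞} (hf : ∀ n, AEMeasurable (f n) μ) {q : ℝ}
    (hq : 1 ≤ q) : eLpNorm' (fun a => ∑' n, f n a) q μ ≤ ∑' n, eLpNorm' (f n) q μ := by
  have hq0 : 0 < q := by linarith
  have hrpow : ∀ (s : ℝ) (hs : 0 < s) (g : ℕ → ℝ≥0∞), (⨆ N, g N) ^ s = ⨆ N, g N ^ s :=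
    fun s hs g => (ENNReal.orderIsoRpow s hs).map_iSup g
  have hlim :
      ∫⁻ a, (∑' n, f n a) ^ q ∂μ = ⨆ N, ∫⁻ a, (∑ n ∈ range N, f n a) ^ q ∂μ := by
    simp_rw [ENNReal.tsum_eq_iSup_nat, hrpow q hq0]
    refine lintegral_iSup' (fun N => ?_) (ae_of_all _ fun a N N' hN => ?_)
    · exact (Finset.aemeasurable_fun_sum _ fun n _ => hf n).pow_const q
    · exact ENNReal.rpow_le_rpow
        (Finset.sum_le_sum_of_subset (range_subset_range.2 hN)) hq0.le
  calc eLpNorm' (fun a => ∑' n, f n a) q μ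
      = ⨆ N, eLpNorm' (∑ n ∈ range N, f n) q μ := by
        simp only [eLpNorm'_eq_lintegral_enorm, enorm_eq_self, Finset.sum_apply]
        rw [hlim, hrpow _ (by positivity)]
    _ ≤ ∑' n, eLpNorm' (f n) q μ := iSup_le fun N =>
        (eLpNorm'_sum_le (fun n _ => (hf n).aestronglyMeasurable) hq).trans
          (ENNReal.sum_le_tsum _)

end MeasureTheory

theorem lintegral_rpow_killed_term_eq {Ω : Type*} [MeasurableSpace Ω] {μ : Measure Ω}
    {S' B : ℕ → Ω → ℝ} {τ : Ω → ℕ} {n : ℕ} (hS : Measurable (S' n))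
    (hB : Measurable (B (n + 1))) (hτ : Measurable τ)
    (hBindep : IndepFun (fun ω => fun n => B n ω) (fun ω => ((fun n => S' n ω), τ ω)) μ)
    {α : ℝ} (hα : 0 < α) :
    ∫⁻ ω, ENNReal.ofReal
        (if n + 1 < τ ω then Real.exp (S' n ω) * |B (n + 1) ω| else 0) ^ α ∂μ =
      (∫⁻ ω in {ω | n + 1 < τ ω}, ENNReal.ofReal (Real.exp (α * S' n ω)) ∂μ) *
        ∫⁻ ω, ENNReal.ofReal (|B (n + 1) ω| ^ α) ∂μ := by
  set A := {ω | n + 1 < τ ω}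
  have hA : MeasurableSet A := measurableSet_lt measurable_const hτ
  set f := A.indicator fun ω => ENNReal.ofReal (Real.exp (α * S' n ω))
  set g := fun ω => ENNReal.ofReal (|B (n + 1) ω| ^ α)
  have hfactor : ∀ ω, ENNReal.ofReal
      (if n + 1 < τ ω then Real.exp (S' n ω) * |B (n + 1) ω| else 0) ^ α = f ω * g ω := by
    intro ω
    simp only [f, g]
    by_cases h : n + 1 < τ ω
    · rw [if_pos h, Set.indicator_of_mem (by exact h), ← ENNReal.ofReal_mul (Real.exp_nonneg _),
        ENNReal.ofReal_rpow_of_nonneg (by positivity) hα.le,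
        Real.mul_rpow (Real.exp_nonneg _) (abs_nonneg _), ← Real.exp_mul, mul_comm (S' n ω)]
    · rw [if_neg h, Set.indicator_of_notMem (by exact h), ENNReal.ofReal_zero,
        ENNReal.zero_rpow_of_pos hα, zero_mul]
  have hfg : IndepFun f g μ := by
    refine (hBindep.comp (φ := fun b => ENNReal.ofReal (|b (n + 1)| ^ α))
      (ψ := ({p | n + 1 < p.2} : Set ((ℕ → ℝ) × ℕ)).indicator
        fun p => ENNReal.ofReal (Real.exp (α * p.1 n))) ?_ ?_).symm
    · fun_prop
    · exact (by fun_prop : Measurable _).indicator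
        (measurableSet_lt measurable_const measurable_snd)
  rw [lintegral_congr hfactor, lintegral_mul_eq_lintegral_mul_lintegral_of_indepFun''
    (by fun_prop) (by fun_prop) hfg, lintegral_indicator hA]

theorem moment_bound_from_geometric_decay_general {Ω : Type*} [MeasurableSpace Ω]
    (μ : Measure Ω)
    (S' : ℕ → Ω → ℝ) (B : ℕ → Ω → ℝ) (τ : Ω → ℕ)
    (hSmeas : ∀ n, Measurable (S' n)) (hBmeas : ∀ n, Measurable (B n))
    (hτmeas : Measurable τ)
    (K ρ α : ℝ) (hρ : 1 < ρ) (hα : 1 ≤ α)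
    (hdecay : ∀ n : ℕ, ∫⁻ ω in {ω | n < τ ω},
        ENNReal.ofReal (Real.exp (α * S' n ω)) ∂μ ≤
      ENNReal.ofReal (K * ρ ^ (-(n : ℝ))))
    (hBident : ∀ n, IdentDistrib (B n) (B 0) μ μ)
    (hBindep : IndepFun (fun ω => fun n => B n ω)
      (fun ω => ((fun n => S' n ω), τ ω)) μ)
    (hBmom : ∫⁻ ω, ENNReal.ofReal (|B 0 ω| ^ α) ∂μ < ⊤) :
    ∫⁻ ω, ENNReal.ofReal
      ((|B 0 ω| + ∑' n : ℕ,
          (if n + 1 < τ ω then Real.exp (S' n ω) * |B (n + 1) ω| else 0)) ^ α)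
      ∂μ < ⊤ := by
  have hα0 : 0 < α := by linarith
  set M := ∫⁻ ω, ENNReal.ofReal (|B 0 ω| ^ α) ∂μ
  set r := ENNReal.ofReal ρ⁻¹
  set G : ℕ → Ω → ℝ≥0∞ := fun n ω =>
    ENNReal.ofReal (if n + 1 < τ ω then Real.exp (S' n ω) * |B (n + 1) ω| else 0)
  have hGmeas : ∀ n, Measurable (G n) := fun n =>
    (Measurable.ite (measurableSet_lt measurable_const hτmeas) (by fun_prop)
      measurable_const).ennreal_ofReal
  have hmoment : ∀ n, ∫⁻ ω, ENNReal.ofReal (|B n ω| ^ α) ∂μ = M := fun n =>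
    ((hBident n).comp
      (by fun_prop : Measurable fun x : ℝ => ENNReal.ofReal (|x| ^ α))).lintegral_eq
  have hgeom : ∀ n : ℕ, ENNReal.ofReal (K * ρ ^ (-(n : ℝ))) = ENNReal.ofReal K * r ^ n :=
    fun n => by
      rw [ENNReal.ofReal_mul' (by positivity), Real.rpow_neg (by positivity), Real.rpow_natCast,
        ← inv_pow, ENNReal.ofReal_pow (by positivity)]
  have hG : ∀ n, eLpNorm' (G n) α μ ≤ (ENNReal.ofReal K * M * r ^ n) ^ (1 / α) := fun n => by
    rw [eLpNorm'_eq_lintegral_enorm]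
    gcongr
    simp only [enorm_eq_self, G]
    rw [lintegral_rpow_killed_term_eq (hSmeas n) (hBmeas _) hτmeas hBindep hα0, hmoment,
      mul_right_comm, ← hgeom]
    gcongr
    exact (lintegral_mono_set fun ω (hω : n + 1 < τ ω) => (Nat.lt_succ_self n).trans hω).trans
      (hdecay n)
  have hnorm : eLpNorm' (fun ω => ENNReal.ofReal |B 0 ω| + ∑' n, G n ω) α μ < ∞ :=
    calc eLpNorm' (fun ω => ENNReal.ofReal |B 0 ω| + ∑' n, G n ω) α μ
        ≤ eLpNorm' (fun ω => ENNReal.ofReal |B 0 ω|) α μ +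
            eLpNorm' (fun ω => ∑' n, G n ω) α μ :=
          eLpNorm'_add_le (hBmeas 0).abs.ennreal_ofReal.aestronglyMeasurable
            (Measurable.tsum hGmeas).aestronglyMeasurable hα
      _ ≤ M ^ (1 / α) + ∑' n, (ENNReal.ofReal K * M * r ^ n) ^ (1 / α) := by
          gcongr
          · simp [eLpNorm'_eq_lintegral_enorm, ENNReal.ofReal_rpow_of_nonneg, hα0.le, M]
          · exact (eLpNorm'_tsum_le (fun n => (hGmeas n).aemeasurable) hα).trans
              (ENNReal.tsum_le_tsum hG)
      _ < ∞ := ENNReal.add_lt_top.2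
          ⟨ENNReal.rpow_lt_top_of_nonneg (by positivity) hBmom.ne,
            ENNReal.tsum_rpow_mul_geometric_lt_top
              (ENNReal.mul_ne_top ENNReal.ofReal_ne_top hBmom.ne)
              (by simpa [r] using inv_lt_one_of_one_lt₀ hρ) (by positivity)⟩
  calc ∫⁻ ω, ENNReal.ofReal ((|B 0 ω| + ∑' n : ℕ,
          (if n + 1 < τ ω then Real.exp (S' n ω) * |B (n + 1) ω| else 0)) ^ α) ∂μ
      ≤ ∫⁻ ω, (ENNReal.ofReal |B 0 ω| + ∑' n, G n ω) ^ α ∂μ :=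
        lintegral_mono fun ω => ENNReal.ofReal_rpow_add_tsum_le (abs_nonneg _)
          (fun n => by split_ifs <;> positivity) hα0.le
    _ < ∞ := by simpa using lintegral_rpow_enorm_lt_top_of_eLpNorm'_lt_top hα0 hnorm

theorem moment_bound_from_geometric_decay {Ω : Type*} [MeasurableSpace Ω]
    (μ : Measure Ω) [IsProbabilityMeasure μ]
    (S' : ℕ → Ω → ℝ) (B : ℕ → Ω → ℝ) (τ : Ω → ℕ)
    (hSmeas : ∀ n, Measurable (S' n)) (hBmeas : ∀ n, Measurable (B n))
    (hτmeas : Measurable τ) (hτ : ∀ ω, 1 ≤ τ ω)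
    (K ρ α : ℝ) (hρ : 1 < ρ) (hα : 1 ≤ α)
    (hdecay : ∀ n : ℕ, ∫⁻ ω in {ω | n < τ ω},
        ENNReal.ofReal (Real.exp (α * S' n ω)) ∂μ ≤
      ENNReal.ofReal (K * ρ ^ (-(n : ℝ))))
    (hBiid : iIndepFun B μ)
    (hBident : ∀ n, IdentDistrib (B n) (B 0) μ μ)
    (hBindep : IndepFun (fun ω => fun n => B n ω)
      (fun ω => ((fun n => S' n ω), τ ω)) μ)
    (hBmom : ∫⁻ ω, ENNReal.ofReal (|B 0 ω| ^ α) ∂μ < ⊤) :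
    ∫⁻ ω, ENNReal.ofReal
      ((|B 0 ω| + ∑' n : ℕ,
          (if n + 1 < τ ω then Real.exp (S' n ω) * |B (n + 1) ω| else 0)) ^ α)
      ∂μ < ⊤ :=
  moment_bound_from_geometric_decay_general μ S' B τ hSmeas hBmeas hτmeas K ρ α hρ hα hdecay hBident
    hBindep hBmom
end

section
/- Let (Ǎ_i, B̌_i, M̌_i)_{i≥1} be an i.i.d. sequence of random vectors with Ǎ_i > 0, independent of (Ǎ_0, B̌_0, M̌_0), and let W = sup_{i≥0} V_i with V_i as in the recursion V_0 = M̌_0, V_i = B̌_0 + Ǎ_0 B̌_1 + ⋯ + (Ǎ_0 ⋯ Ǎ_{i-1}) M̌_i. Then W equals in distribution B̌_0 + max{M̌_0 - B̌_0, Ǎ_0 W^ℜ}, where W^ℜ is an independent copy of sup_{i≥0} V_i^{(1)} built from the shifted sequence, and W^ℜ equals in distribution B̌ + max{M̌ - B̌, Ǎ W^ℜ} with (Ǎ, B̌, M̌) distributed as (Ǎ_1, B̌_1, M̌_1) and independent of W^ℜ. -/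
/-!
Splitting off the index `0` in the supremum gives, pathwise,
`W = B₀ + max (M₀ - B₀) (A₀ W^ℜ)`: adding a real and multiplying by a positive real commute with
suprema in `EReal`. The same identity for the shifted sequence writes `W^ℜ` as this map applied to
`(A₁, B₁, M₁)` and the supremum over the twice-shifted sequence. By the i.i.d. assumption the
twice-shifted sequence has the law of the once-shifted one and is independent of `(A₁, B₁, M₁)`, so
the pair it forms with `(A₁, B₁, M₁)` has the law of any independent pair `((A, B, M), W')` with
the same marginals.
-/

open MeasureTheory ProbabilityTheory

noncomputable def perpCycleSup (A B M : ℕ → ℝ) : EReal :=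
  ⨆ i : ℕ, ((∑ j ∈ Finset.range i, (∏ k ∈ Finset.range j, A k) * B j +
      (∏ k ∈ Finset.range i, A k) * M i : ℝ) : EReal)

namespace EReal

lemma coe_add_iSup {ι : Sort*} (b : ℝ) (f : ι → EReal) :
    (b : EReal) + ⨆ i, f i = ⨆ i, ((b : EReal) + f i) :=
  GaloisConnection.l_iSup (u := (· - (b : EReal))) fun x y => by
    rw [add_comm, EReal.le_sub_iff_add_le (.inl (coe_ne_bot b)) (.inl (coe_ne_top b))]

lemma coe_mul_iSup {ι : Sort*} {a : ℝ} (ha : 0 < a) (f : ι → EReal) :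
    (a : EReal) * ⨆ i, f i = ⨆ i, ((a : EReal) * f i) :=
  GaloisConnection.l_iSup (u := (· / (a : EReal))) fun x y => by
    rw [mul_comm, EReal.le_div_iff_mul_le (by exact_mod_cast ha) (coe_ne_top a)]

end EReal

namespace ProbabilityTheory

lemma iIndepFun.indepFun_head_tail {Ω E : Type*} [MeasurableSpace Ω] [MeasurableSpace E]
    {μ : Measure Ω} {X : ℕ → Ω → E} (hX : ∀ i, Measurable (X i)) (h : iIndepFun X μ) :
    IndepFun (X 0) (fun ω i => X (i + 1) ω) μ := by
  rw [IndepFun_iff_Indep]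
  set m : ℕ → MeasurableSpace Ω := fun i => MeasurableSpace.comap (X i) inferInstance
  have hindep := indep_iSup_of_disjoint (fun i => (hX i).comap_le)
    ((iIndepFun_iff_iIndep _ _ _).1 h) (S := {0}) (T := Set.Ioi 0) (by simp)
  refine indep_of_indep_of_le_right (indep_of_indep_of_le_left hindep ?_) ?_
  · exact le_iSup₂ (f := fun i (_ : i ∈ ({0} : Set ℕ)) => m i) 0 rfl
  · have htail : Measurable[⨆ i ∈ Set.Ioi 0, m i] (fun ω i => X (i + 1) ω) :=
      @measurable_pi_lambda _ _ _ (⨆ i ∈ Set.Ioi 0, m i) _ _ fun i => Measurable.of_comap_le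
        (le_iSup₂ (f := fun i (_ : i ∈ Set.Ioi 0) => m i) (i + 1) i.succ_pos)
    exact htail.comap_le

end ProbabilityTheory

/-- The paper's `V_i`. -/
def perpTerm (A B M : ℕ → ℝ) (i : ℕ) : ℝ :=
  ∑ j ∈ Finset.range i, (∏ k ∈ Finset.range j, A k) * B j + (∏ k ∈ Finset.range i, A k) * M i

noncomputable def perpStep (x : ℝ × ℝ × ℝ) (w : EReal) : EReal :=
  x.2.1 + max ((x.2.2 - x.2.1 : ℝ) : EReal) (x.1 * w)

section Pathwise

variable (A B M : ℕ → ℝ)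

lemma perpTerm_zero : perpTerm A B M 0 = M 0 := by
  simp [perpTerm]

lemma perpTerm_succ (i : ℕ) :
    perpTerm A B M (i + 1) =
      B 0 + A 0 * perpTerm (fun i => A (i + 1)) (fun i => B (i + 1)) (fun i => M (i + 1)) i := by
  simp only [perpTerm, Finset.sum_range_succ' _ i, Finset.prod_range_succ' A,
    Finset.prod_range_zero, one_mul, mul_add, Finset.mul_sum, mul_comm _ (A 0), mul_assoc]
  ring

lemma perpCycleSup_eq_perpStep (hA : 0 < A 0) :
    perpCycleSup A B M = perpStep (A 0, B 0, M 0)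
      (perpCycleSup (fun i => A (i + 1)) (fun i => B (i + 1)) (fun i => M (i + 1))) := by
  change ⨆ i, (perpTerm A B M i : EReal) = (B 0 : EReal) + max ((M 0 - B 0 : ℝ) : EReal)
    ((A 0 : EReal) * ⨆ i, (perpTerm (fun i => A (i + 1)) (fun i => B (i + 1))
      (fun i => M (i + 1)) i : EReal))
  rw [← sup_iSup_nat_succ, EReal.coe_mul_iSup hA, add_max, ← EReal.coe_add, add_sub_cancel,
    perpTerm_zero, EReal.coe_add_iSup]
  simp_rw [perpTerm_succ, EReal.coe_add, EReal.coe_mul]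

end Pathwise

lemma measurable_perpCycleSup {Ω : Type*} [MeasurableSpace Ω] {A B M : ℕ → Ω → ℝ}
    (hA : ∀ i, Measurable (A i)) (hB : ∀ i, Measurable (B i)) (hM : ∀ i, Measurable (M i)) :
    Measurable fun ω => perpCycleSup (fun i => A i ω) (fun i => B i ω) (fun i => M i ω) :=
  Measurable.iSup fun i => Measurable.coe_real_ereal (by fun_prop)

lemma measurable_perpStep : Measurable fun p : (ℝ × ℝ × ℝ) × EReal => perpStep p.1 p.2 := by
  unfold perpStep
  fun_prop

theorem perpetuity_distributional_fixed_point_general {Ω : Type*} [MeasurableSpace Ω]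
    (μ : Measure Ω)
    (A B M : ℕ → Ω → ℝ)
    (hAmeas : ∀ i, Measurable (A i)) (hBmeas : ∀ i, Measurable (B i))
    (hMmeas : ∀ i, Measurable (M i))
    (hApos : ∀ i ω, 0 < A i ω)
    (hiid : iIndepFun
      (fun i => fun ω => (A (i + 1) ω, B (i + 1) ω, M (i + 1) ω)) μ)
    (hident : ∀ i : ℕ, 1 ≤ i → IdentDistrib
      (fun ω => (A i ω, B i ω, M i ω)) (fun ω => (A 1 ω, B 1 ω, M 1 ω)) μ μ)
    (hindep0 : IndepFun (fun ω => (A 0 ω, B 0 ω, M 0 ω))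
      (fun ω => fun i : ℕ => (A (i + 1) ω, B (i + 1) ω, M (i + 1) ω)) μ) :
    (IdentDistrib
        (fun ω => perpCycleSup (fun i => A i ω) (fun i => B i ω) (fun i => M i ω))
        (fun ω => (B 0 ω : EReal) + max ((M 0 ω - B 0 ω : ℝ) : EReal)
          ((A 0 ω : EReal) * perpCycleSup (fun i => A (i + 1) ω)
            (fun i => B (i + 1) ω) (fun i => M (i + 1) ω))) μ μ
      ∧ IndepFun (fun ω => (A 0 ω, B 0 ω, M 0 ω))
          (fun ω => perpCycleSup (fun i => A (i + 1) ω)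
            (fun i => B (i + 1) ω) (fun i => M (i + 1) ω)) μ)
    ∧ ∀ (Ω' : Type) (_ : MeasurableSpace Ω') (ν : Measure Ω'),
        IsProbabilityMeasure ν →
      ∀ (A' B' M' : Ω' → ℝ) (W' : Ω' → EReal),
        IdentDistrib (fun ω' => (A' ω', B' ω', M' ω'))
          (fun ω => (A 1 ω, B 1 ω, M 1 ω)) ν μ →
        IdentDistrib W' (fun ω => perpCycleSup (fun i => A (i + 1) ω)
          (fun i => B (i + 1) ω) (fun i => M (i + 1) ω)) ν μ →
        IndepFun (fun ω' => (A' ω', B' ω', M' ω')) W' ν →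
        IdentDistrib
          (fun ω' => (B' ω' : EReal) + max ((M' ω' - B' ω' : ℝ) : EReal)
            ((A' ω' : EReal) * W' ω'))
          (fun ω => perpCycleSup (fun i => A (i + 1) ω)
            (fun i => B (i + 1) ω) (fun i => M (i + 1) ω)) ν μ := by
  set X : ℕ → Ω → ℝ × ℝ × ℝ := fun i ω => (A (i + 1) ω, B (i + 1) ω, M (i + 1) ω)
  have hX : ∀ i, Measurable (X i) := fun i => (hAmeas _).prodMk ((hBmeas _).prodMk (hMmeas _))
  set W : (ℕ → ℝ × ℝ × ℝ) → EReal :=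
    fun x => perpCycleSup (fun i => (x i).1) (fun i => (x i).2.1) (fun i => (x i).2.2)
  have hW : Measurable W := measurable_perpCycleSup (fun i => (measurable_pi_apply i).fst)
    (fun i => (measurable_pi_apply i).snd.fst) (fun i => (measurable_pi_apply i).snd.snd)
  refine ⟨⟨IdentDistrib.of_ae_eq ?_ (ae_of_all _ fun ω =>
      perpCycleSup_eq_perpStep _ _ _ (hApos 0 ω)), hindep0.comp measurable_id hW⟩, ?_⟩
  · exact (measurable_perpCycleSup hAmeas hBmeas hMmeas).aemeasurable
  intro Ω' _ ν _ A' B' M' W' hXν hWν hindepν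
  have hshift : IdentDistrib (fun ω i => X (i + 1) ω) (fun ω i => X i ω) μ μ :=
    IdentDistrib.pi (fun i => (hident (i + 2) (by omega)).trans (hident (i + 1) (by omega)).symm)
      (hiid.precomp Nat.succ_injective) hiid
  have hpair : IdentDistrib (fun ω' => ((A' ω', B' ω', M' ω'), W' ω'))
      (fun ω => (X 0 ω, W fun i => X (i + 1) ω)) ν μ :=
    hXν.prodMk (hWν.trans (hshift.comp hW).symm) hindepν
      ((hiid.indepFun_head_tail hX).comp measurable_id hW)
  have hrec : ∀ ω, perpStep (X 0 ω) (W fun i => X (i + 1) ω) =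
      perpCycleSup (fun i => A (i + 1) ω) (fun i => B (i + 1) ω) (fun i => M (i + 1) ω) :=
    fun ω => (perpCycleSup_eq_perpStep (fun i => A (i + 1) ω) (fun i => B (i + 1) ω)
      (fun i => M (i + 1) ω) (hApos 1 ω)).symm
  have hstep := hpair.comp measurable_perpStep
  exact hstep.trans (IdentDistrib.of_ae_eq hstep.aemeasurable_snd (ae_of_all _ hrec))

theorem perpetuity_distributional_fixed_point {Ω : Type*} [MeasurableSpace Ω]
    (μ : Measure Ω) [IsProbabilityMeasure μ]
    (A B M : ℕ → Ω → ℝ)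
    (hAmeas : ∀ i, Measurable (A i)) (hBmeas : ∀ i, Measurable (B i))
    (hMmeas : ∀ i, Measurable (M i))
    (hApos : ∀ i ω, 0 < A i ω)
    (hiid : iIndepFun
      (fun i => fun ω => (A (i + 1) ω, B (i + 1) ω, M (i + 1) ω)) μ)
    (hident : ∀ i : ℕ, 1 ≤ i → IdentDistrib
      (fun ω => (A i ω, B i ω, M i ω)) (fun ω => (A 1 ω, B 1 ω, M 1 ω)) μ μ)
    (hindep0 : IndepFun (fun ω => (A 0 ω, B 0 ω, M 0 ω))
      (fun ω => fun i : ℕ => (A (i + 1) ω, B (i + 1) ω, M (i + 1) ω)) μ) :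
    (IdentDistrib
        (fun ω => perpCycleSup (fun i => A i ω) (fun i => B i ω) (fun i => M i ω))
        (fun ω => (B 0 ω : EReal) + max ((M 0 ω - B 0 ω : ℝ) : EReal)
          ((A 0 ω : EReal) * perpCycleSup (fun i => A (i + 1) ω)
            (fun i => B (i + 1) ω) (fun i => M (i + 1) ω))) μ μ
      ∧ IndepFun (fun ω => (A 0 ω, B 0 ω, M 0 ω))
          (fun ω => perpCycleSup (fun i => A (i + 1) ω)
            (fun i => B (i + 1) ω) (fun i => M (i + 1) ω)) μ)
    ∧ ∀ (Ω' : Type) (_ : MeasurableSpace Ω') (ν : Measure Ω'),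
        IsProbabilityMeasure ν →
      ∀ (A' B' M' : Ω' → ℝ) (W' : Ω' → EReal),
        IdentDistrib (fun ω' => (A' ω', B' ω', M' ω'))
          (fun ω => (A 1 ω, B 1 ω, M 1 ω)) ν μ →
        IdentDistrib W' (fun ω => perpCycleSup (fun i => A (i + 1) ω)
          (fun i => B (i + 1) ω) (fun i => M (i + 1) ω)) ν μ →
        IndepFun (fun ω' => (A' ω', B' ω', M' ω')) W' ν →
        IdentDistrib
          (fun ω' => (B' ω' : EReal) + max ((M' ω' - B' ω' : ℝ) : EReal)
            ((A' ω' : EReal) * W' ω'))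
          (fun ω => perpCycleSup (fun i => A (i + 1) ω)
            (fun i => B (i + 1) ω) (fun i => M (i + 1) ω)) ν μ :=
  perpetuity_distributional_fixed_point_general μ A B M hAmeas hBmeas hMmeas hApos hiid hident
    hindep0
end
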